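/- Time-shifted synchronization of the augmented birth-death chain: let x, y ∈ ℕ have the same parity. Then for ℙ_Ω-a.e. ω = (q,r) ∈ Ω there exist n₀ ∈ ℕ and R ≥ 0 such that for all n ≥ n₀ one has Xⁿ(x) = Xⁿ(y) and |Tⁿ(x) − Tⁿ(y)| = R, where Xⁿ and Tⁿ denote the state and jump-time sequences of the augmented Markov chain started at state x (resp. y) at time 0. -/

import Mathlib

open MeasureTheory ProbabilityTheory Filter

/-- The birth-death transition map. -/
noncomputable def bdStep (γ₁ γ₂ : ℝ) (q : ℝ) (x : ℕ) : ℕ :=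
  if q < γ₁ / (γ₁ + γ₂ * x) then x + 1 else x - 1

/-- The state sequence of the embedded birth-death chain. -/
noncomputable def bdCocycle (γ₁ γ₂ : ℝ) (q : ℕ → ℝ) : ℕ → ℕ → ℕ
  | 0, x => x
  | n + 1, x => bdStep γ₁ γ₂ (q n) (bdCocycle γ₁ γ₂ q n x)

/-- The jump-time sequence of the augmented birth-death chain: `T⁰ = 0` and
`T^{n+1} = Tⁿ + (1/(γ₁+γ₂·Xⁿ))·log(1/rₙ)`, where the noise is `ωₙ = (qₙ, rₙ)`. -/
noncomputable def bdTime (γ₁ γ₂ : ℝ) (ω : ℕ → ℝ × ℝ) (x : ℕ) : ℕ → ℝ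
  | 0 => 0
  | n + 1 => bdTime γ₁ γ₂ ω x n +
      (1 / (γ₁ + γ₂ * (bdCocycle γ₁ γ₂ (fun k => (ω k).1) n x : ℝ))) *
        Real.log (1 / (ω n).2)


/-!
Fix `M` with `γ₂ M > γ₁`. At states `≥ M` the chain steps up with probability
`γ₁/(γ₁+γ₂M) < 1/2`, so the larger of the two chains is dominated by a random walk with negative
drift reflected at `M`; by the strong law of large numbers it returns to `M` infinitely often, so
both chains are `≤ 2M` at infinitely many times `jM`. From such a time, `2M` consecutive coins
`q ≥ γ₁/(γ₁+γ₂)`, an event of probability `c > 0` independent of the past, push both chains into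
`{0, 1}`; since a.s. the parity of each chain at time `n` is that of its start plus `n`, they
meet. This gives `P(apart at (j+2)M) + c · P(apart and low at jM) ≤ P(apart at jM)`, so the
probabilities of "apart and low at `jM`" are summable, and Borel–Cantelli shows that the chains
meet almost surely. After meeting they agree forever, and the increments of the jump times
coincide, so the difference of the jump times stays constant.
-/

theorem frequently_le_of_le_max_add {Z S : ℕ → ℝ} {b m : ℝ} (hZ : ∀ n, b ≤ Z n)
    (hS : Tendsto S atTop atBot) (hstep : ∀ n, Z (n + 1) ≤ max (Z n + (S (n + 1) - S n)) m) :
    ∃ᶠ n in atTop, Z n ≤ m := by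
  rw [frequently_atTop]
  intro N
  by_contra! hlarge
  have hdrift : ∀ k, Z (N + k) - S (N + k) ≤ Z N - S N := by
    intro k
    induction k with
    | zero => rfl
    | succ k ih =>
      have hZk := hlarge (N + k + 1) (by omega)
      rw [← add_assoc]
      rcases le_max_iff.1 (hstep (N + k)) with h | h <;> linarith
  obtain ⟨n, hn, hSn⟩ :=
    ((eventually_ge_atTop N).and (hS.eventually_lt_atBot (b - Z N + S N))).exists
  obtain ⟨k, rfl⟩ := Nat.exists_eq_add_of_le hn
  linarith [hdrift k, hZ (N + k)]

theorem frequently_apply_mul_le_add {Z : ℕ → ℝ} {m : ℝ} {L : ℕ} (hL : 0 < L)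
    (hZ : ∀ n, Z (n + 1) ≤ Z n + 1) (h : ∃ᶠ n in atTop, Z n ≤ m) :
    ∃ᶠ j in atTop, Z (j * L) ≤ m + L := by
  have hgrowth (n k : ℕ) : Z (n + k) ≤ Z n + k := by
    induction k with
    | zero => simp
    | succ k ih => rw [← add_assoc]; push_cast; linarith [hZ (n + k)]
  rw [frequently_atTop] at h ⊢
  intro J
  obtain ⟨n, hn, hZn⟩ := h (J * L)
  have hlt := Nat.lt_div_mul_add (a := n) hL
  have hle := Nat.div_mul_le_self n L
  obtain ⟨d, hd, hdL⟩ : ∃ d, (n / L + 1) * L = n + d ∧ d ≤ L :=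
    ⟨n / L * L + L - n, by rw [add_one_mul]; omega, by omega⟩
  refine ⟨n / L + 1, ((Nat.le_div_iff_mul_le hL).2 hn).trans (Nat.le_succ _), ?_⟩
  rw [hd]
  calc Z (n + d) ≤ Z n + d := hgrowth n d
    _ ≤ m + L := by gcongr

theorem mul_tsum_le_add_of_add_mul_le {a b : ℕ → ENNReal} {c : ENNReal}
    (h : ∀ j, a (j + 2) + c * b j ≤ a j) : c * ∑' j, b j ≤ a 0 + a 1 := by
  have hpartial (K : ℕ) : a K + a (K + 1) + c * ∑ j ∈ Finset.range K, b j ≤ a 0 + a 1 := by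
    induction K with
    | zero => simp
    | succ K ih =>
      calc a (K + 1) + a (K + 1 + 1) + c * ∑ j ∈ Finset.range (K + 1), b j
          = a (K + 1) + (a (K + 2) + c * b K) + c * ∑ j ∈ Finset.range K, b j := by
            rw [Finset.sum_range_succ]; ring
        _ ≤ a (K + 1) + a K + c * ∑ j ∈ Finset.range K, b j := by gcongr; exact h K
        _ ≤ a 0 + a 1 := by rw [add_comm (a (K + 1))]; exact ih
  rw [← ENNReal.tsum_mul_left]
  refine ENNReal.tsum_le_of_sum_range_le fun K => ?_
  rw [← Finset.mul_sum]
  exact le_add_self.trans (hpartial K)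

theorem ae_tendsto_sum_atBot_of_integral_neg {Ω : Type*} [MeasurableSpace Ω] {μ : Measure Ω}
    {ξ : ℕ → Ω → ℝ} (hint : Integrable (ξ 0) μ)
    (hindep : Pairwise (Function.onFun (IndepFun · · μ) ξ))
    (hident : ∀ i, IdentDistrib (ξ i) (ξ 0) μ μ) (hneg : μ[ξ 0] < 0) :
    ∀ᵐ ω ∂μ, Tendsto (fun n => ∑ i ∈ Finset.range n, ξ i ω) atTop atBot := by
  filter_upwards [strong_law_ae ξ hint hindep hident] with ω hω
  refine (tendsto_natCast_atTop_atTop.atTop_mul_neg hneg hω).congr' ?_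
  filter_upwards [eventually_ne_atTop 0] with n hn
  rw [smul_eq_mul, ← mul_assoc, mul_inv_cancel₀ (Nat.cast_ne_zero.2 hn), one_mul]

theorem measure_inter_eq_mul_of_dependsOn {ι : Type*} {β : ι → Type*}
    [∀ i, MeasurableSpace (β i)] {P : Measure (Π i, β i)}
    (hP : iIndepFun (fun i (ω : Π i, β i) => ω i) P) {S T : Finset ι} (hST : Disjoint S T)
    {A B : Set (Π i, β i)} (hA : MeasurableSet A) (hB : MeasurableSet B)
    (hAS : DependsOn (· ∈ A) S) (hBT : DependsOn (· ∈ B) T) :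
    P (A ∩ B) = P A * P B := by
  classical
  rcases isEmpty_or_nonempty (Π i, β i) with _ | ⟨⟨ω₀⟩⟩
  · simp [Set.eq_empty_of_isEmpty]
  have hpreimage {U : Set (Π i, β i)} {R : Finset ι} (hU : DependsOn (· ∈ U) R) :
      U = (fun ω (i : R) => ω i) ⁻¹' (Function.updateFinset ω₀ R ⁻¹' U) := by
    ext ω
    exact eq_iff_iff.1 (hU fun i hi => by simp [Function.updateFinset, Finset.mem_coe.1 hi])
  rw [hpreimage hAS, hpreimage hBT]
  exact (hP.indepFun_finset S T hST measurable_pi_apply).measure_inter_preimage_eq_mul _ _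
    (measurable_updateFinset hA) (measurable_updateFinset hB)

theorem map_fst_eq_of_map_eq_prod {Ω α β : Type*} [MeasurableSpace Ω] [MeasurableSpace α]
    [MeasurableSpace β] {P : Measure Ω} {f : Ω → α × β} (hf : Measurable f) {μ : Measure α}
    {ν : Measure β} [IsProbabilityMeasure ν] (h : P.map f = μ.prod ν) :
    P.map (fun ω => (f ω).1) = μ := by
  change P.map (Prod.fst ∘ f) = μ
  rw [← Measure.map_map measurable_fst hf, h, Measure.map_fst_prod, measure_univ, one_smul]

instance : IsProbabilityMeasure (volume.restrict (Set.Icc (0 : ℝ) 1)) := ⟨by simp⟩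

theorem volume_restrict_Icc_Ici {t : ℝ} (ht : 0 ≤ t) :
    volume.restrict (Set.Icc (0 : ℝ) 1) (Set.Ici t) = ENNReal.ofReal (1 - t) := by
  have hinter : Set.Ici t ∩ Set.Icc 0 1 = Set.Icc t 1 := by
    ext a
    simp only [Set.mem_inter_iff, Set.mem_Ici, Set.mem_Icc]
    grind
  rw [Measure.restrict_apply measurableSet_Ici, hinter, Real.volume_Icc]

theorem integral_volume_restrict_Icc_sign {t : ℝ} (ht₀ : 0 ≤ t) (ht₁ : t ≤ 1) :
    ∫ a in Set.Icc (0 : ℝ) 1, (if a < t then (1 : ℝ) else -1) = 2 * t - 1 := by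
  have hpiecewise : (fun a : ℝ => if a < t then (1 : ℝ) else -1) =
      (Set.Iio t).piecewise (fun _ => 1) (fun _ => -1) := by
    ext a
    simp [Set.piecewise]
  rw [hpiecewise, integral_piecewise measurableSet_Iio (integrable_const _).integrableOn
    (integrable_const _).integrableOn]
  simp only [setIntegral_const, Set.compl_Iio, measureReal_def]
  rw [← Set.compl_Ici, prob_compl_eq_one_sub measurableSet_Ici, volume_restrict_Icc_Ici ht₀,
    ENNReal.toReal_sub_of_le (by simp [ht₀]) ENNReal.one_ne_top]
  simp [ENNReal.toReal_ofReal (by linarith : 0 ≤ 1 - t)]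
  ring

section BirthDeath

variable {γ₁ γ₂ : ℝ}

theorem antitone_bdStep_threshold (hγ₁ : 0 < γ₁) (hγ₂ : 0 ≤ γ₂) :
    Antitone fun s : ℕ => γ₁ / (γ₁ + γ₂ * s) :=
  fun _ _ h => by beta_reduce; gcongr

theorem bdStep_le_succ (a : ℝ) (s : ℕ) : bdStep γ₁ γ₂ a s ≤ s + 1 := by
  unfold bdStep
  split <;> omega

theorem bdStep_of_le {a : ℝ} {s : ℕ} (h : γ₁ / (γ₁ + γ₂ * s) ≤ a) :
    bdStep γ₁ γ₂ a s = s - 1 :=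
  if_neg (not_lt.2 h)

theorem bdStep_zero_of_lt_one (hγ₁ : γ₁ ≠ 0) {a : ℝ} (ha : a < 1) : bdStep γ₁ γ₂ a 0 = 1 := by
  simp [bdStep, div_self hγ₁, ha]

theorem bdStep_le_max_pred_one (hγ₁ : 0 < γ₁) (hγ₂ : 0 ≤ γ₂) {a : ℝ}
    (ha : γ₁ / (γ₁ + γ₂) ≤ a) (s : ℕ) : bdStep γ₁ γ₂ a s ≤ max (s - 1) 1 := by
  rcases Nat.eq_zero_or_pos s with rfl | hs
  · exact (bdStep_le_succ a 0).trans (le_max_right _ _)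
  · rw [bdStep_of_le ((antitone_bdStep_threshold hγ₁ hγ₂ hs).trans (by simpa using ha))]
    exact le_max_left _ _

theorem bdStep_le_max_add (hγ₁ : 0 < γ₁) (hγ₂ : 0 ≤ γ₂) (M : ℕ) (a : ℝ) (s : ℕ) :
    (bdStep γ₁ γ₂ a s : ℝ) ≤ max ((s : ℝ) + if a < γ₁ / (γ₁ + γ₂ * M) then 1 else -1) M := by
  have hsucc : (bdStep γ₁ γ₂ a s : ℝ) ≤ s + 1 := by exact_mod_cast bdStep_le_succ a s
  by_cases ha : a < γ₁ / (γ₁ + γ₂ * M)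
  · rw [if_pos ha]
    exact le_max_of_le_left hsucc
  rw [if_neg ha]
  rcases lt_or_ge s M with hsM | hMs
  · exact le_max_of_le_right (hsucc.trans (by exact_mod_cast hsM))
  rw [bdStep_of_le ((antitone_bdStep_threshold hγ₁ hγ₂ hMs).trans (not_lt.1 ha))]
  rcases Nat.eq_zero_or_pos s with rfl | hs
  · exact le_max_of_le_right (by simp)
  · exact le_max_of_le_left (by push_cast [Nat.cast_sub hs]; linarith)

theorem bdCocycle_add (q : ℕ → ℝ) (n k x : ℕ) :
    bdCocycle γ₁ γ₂ q (n + k) x =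
      bdCocycle γ₁ γ₂ (fun i => q (n + i)) k (bdCocycle γ₁ γ₂ q n x) := by
  induction k with
  | zero => rfl
  | succ k ih =>
    rw [← add_assoc]
    simp only [bdCocycle]
    rw [ih]

theorem bdCocycle_add_eq_of_eq {q : ℕ → ℝ} {n x y : ℕ}
    (h : bdCocycle γ₁ γ₂ q n x = bdCocycle γ₁ γ₂ q n y) (k : ℕ) :
    bdCocycle γ₁ γ₂ q (n + k) x = bdCocycle γ₁ γ₂ q (n + k) y := by
  rw [bdCocycle_add, bdCocycle_add, h]

theorem bdCocycle_succ_le (q : ℕ → ℝ) (n x : ℕ) :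
    bdCocycle γ₁ γ₂ q (n + 1) x ≤ bdCocycle γ₁ γ₂ q n x + 1 :=
  bdStep_le_succ _ _

theorem dependsOn_bdCocycle (n x : ℕ) :
    DependsOn (fun q : ℕ → ℝ => bdCocycle γ₁ γ₂ q n x) (Set.Iio n) := by
  intro q q' h
  induction n with
  | zero => rfl
  | succ n ih =>
    change bdStep γ₁ γ₂ (q n) (bdCocycle γ₁ γ₂ q n x) =
      bdStep γ₁ γ₂ (q' n) (bdCocycle γ₁ γ₂ q' n x)
    rw [show bdCocycle γ₁ γ₂ q n x = bdCocycle γ₁ γ₂ q' n x from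
      ih fun i hi => h i (Nat.lt_succ_of_lt hi), h n (Nat.lt_succ_self n)]

/-- Without `q i < 1` this fails: a coin `q ≥ 1` at state `0` gives `0 - 1 = 0` in `ℕ`. -/
theorem bdCocycle_mod_two (hγ₁ : γ₁ ≠ 0) {q : ℕ → ℝ} (hq : ∀ i, q i < 1) (n x : ℕ) :
    bdCocycle γ₁ γ₂ q n x % 2 = (x + n) % 2 := by
  induction n with
  | zero => rfl
  | succ n ih =>
    simp only [bdCocycle]
    generalize bdCocycle γ₁ γ₂ q n x = s at ih ⊢
    rcases s with _ | s
    · rw [bdStep_zero_of_lt_one hγ₁ (hq n)]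
      omega
    · unfold bdStep
      split <;> omega

theorem bdCocycle_add_le_max (hγ₁ : 0 < γ₁) (hγ₂ : 0 ≤ γ₂) {q : ℕ → ℝ} {n : ℕ} (x k : ℕ)
    (hq : ∀ i ∈ Finset.Ico n (n + k), γ₁ / (γ₁ + γ₂) ≤ q i) :
    bdCocycle γ₁ γ₂ q (n + k) x ≤ max (bdCocycle γ₁ γ₂ q n x - k) 1 := by
  induction k with
  | zero => exact le_max_left _ _
  | succ k ih =>
    have hstep := bdStep_le_max_pred_one hγ₁ hγ₂
      (hq (n + k) (Finset.mem_Ico.2 ⟨by omega, by omega⟩)) (bdCocycle γ₁ γ₂ q (n + k) x)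
    have hprev := ih fun i hi => hq i (Finset.Ico_subset_Ico_right (by omega) hi)
    rw [← add_assoc]
    change bdStep _ _ _ _ ≤ _
    omega

theorem bdCocycle_add_eq_of_le (hγ₁ : 0 < γ₁) (hγ₂ : 0 ≤ γ₂) {q : ℕ → ℝ} (hq : ∀ i, q i < 1)
    {x y n k : ℕ} (hpar : x % 2 = y % 2) (hx : bdCocycle γ₁ γ₂ q n x ≤ k)
    (hy : bdCocycle γ₁ γ₂ q n y ≤ k)
    (hdown : ∀ i ∈ Finset.Ico n (n + k), γ₁ / (γ₁ + γ₂) ≤ q i) :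
    bdCocycle γ₁ γ₂ q (n + k) x = bdCocycle γ₁ γ₂ q (n + k) y := by
  have := bdCocycle_add_le_max hγ₁ hγ₂ x k hdown
  have := bdCocycle_add_le_max hγ₁ hγ₂ y k hdown
  have := bdCocycle_mod_two (γ₂ := γ₂) hγ₁.ne' hq (n + k) x
  have := bdCocycle_mod_two (γ₂ := γ₂) hγ₁.ne' hq (n + k) y
  omega

theorem bdTime_sub_bdTime_add_of_eq {ω : ℕ → ℝ × ℝ} {n x y : ℕ}
    (h : bdCocycle γ₁ γ₂ (fun i => (ω i).1) n x = bdCocycle γ₁ γ₂ (fun i => (ω i).1) n y)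
    (k : ℕ) :
    bdTime γ₁ γ₂ ω x (n + k) - bdTime γ₁ γ₂ ω y (n + k) =
      bdTime γ₁ γ₂ ω x n - bdTime γ₁ γ₂ ω y n := by
  induction k with
  | zero => rfl
  | succ k ih =>
    rw [← add_assoc]
    simp only [bdTime]
    rw [bdCocycle_add_eq_of_eq h k]
    linarith

theorem measurable_bdCocycle {Ω : Type*} [MeasurableSpace Ω] {q : Ω → ℕ → ℝ}
    (hq : ∀ i, Measurable fun ω => q ω i) (n x : ℕ) :
    Measurable fun ω => bdCocycle γ₁ γ₂ (q ω) n x := by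
  have hstep : Measurable fun p : ℝ × ℕ => bdStep γ₁ γ₂ p.1 p.2 :=
    measurable_from_prod_countable_left fun s =>
      (Measurable.ite measurableSet_Iio measurable_const measurable_const :
        Measurable fun a => bdStep γ₁ γ₂ a s)
  induction n with
  | zero => exact measurable_const
  | succ n ih => exact hstep.comp ((hq n).prodMk ih)

end BirthDeath

section Noise

variable {γ₁ γ₂ : ℝ} {P : Measure (ℕ → ℝ × ℝ)}

theorem ae_forall_fst_lt_one
    (hfst : ∀ i, P.map (fun ω => (ω i).1) = volume.restrict (Set.Icc (0 : ℝ) 1)) :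
    ∀ᵐ ω ∂P, ∀ i, (ω i).1 < 1 := by
  rw [ae_all_iff]
  intro i
  have hlt : ∀ᵐ a ∂volume.restrict (Set.Icc (0 : ℝ) 1), a < 1 := by
    rw [← Measure.restrict_congr_set Ico_ae_eq_Icc]
    filter_upwards [ae_restrict_mem measurableSet_Ico] with a ha using ha.2
  rw [← hfst i] at hlt
  exact ae_of_ae_map (measurable_pi_apply i).fst.aemeasurable hlt

theorem measure_biInter_le_fst (hIndep : iIndepFun (fun n (ω : ℕ → ℝ × ℝ) => ω n) P)
    (hfst : ∀ i, P.map (fun ω => (ω i).1) = volume.restrict (Set.Icc (0 : ℝ) 1))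
    {t : ℝ} (ht : 0 ≤ t) (S : Finset ℕ) :
    P (⋂ i ∈ S, {ω | t ≤ (ω i).1}) = ENNReal.ofReal (1 - t) ^ S.card := by
  have hcoord (i : ℕ) : P {ω | t ≤ (ω i).1} = ENNReal.ofReal (1 - t) := by
    rw [← volume_restrict_Icc_Ici ht, ← hfst i,
      Measure.map_apply (measurable_pi_apply i).fst measurableSet_Ici]
    rfl
  calc P (⋂ i ∈ S, {ω | t ≤ (ω i).1}) = ∏ i ∈ S, P {ω | t ≤ (ω i).1} :=
        hIndep.measure_inter_preimage_eq_mul S (sets := fun _ => {v | t ≤ v.1})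
          fun _ _ => measurableSet_le measurable_const measurable_fst
    _ = ENNReal.ofReal (1 - t) ^ S.card := by simp only [hcoord, Finset.prod_const]

theorem ae_tendsto_sum_sign_atBot [IsProbabilityMeasure P]
    (hIndep : iIndepFun (fun n (ω : ℕ → ℝ × ℝ) => ω n) P)
    (hfst : ∀ i, P.map (fun ω => (ω i).1) = volume.restrict (Set.Icc (0 : ℝ) 1))
    {t : ℝ} (ht₀ : 0 ≤ t) (ht : t < 1 / 2) :
    ∀ᵐ ω ∂P, Tendsto (fun n => ∑ i ∈ Finset.range n, if (ω i).1 < t then (1 : ℝ) else -1)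
      atTop atBot := by
  set g : ℝ → ℝ := fun a => if a < t then 1 else -1
  have hg : Measurable g := Measurable.ite measurableSet_Iio measurable_const measurable_const
  have hξ (i : ℕ) : Measurable fun ω : ℕ → ℝ × ℝ => g (ω i).1 :=
    hg.comp (measurable_pi_apply i).fst
  have hmap (i : ℕ) :
      P.map (fun ω => g (ω i).1) = (volume.restrict (Set.Icc (0 : ℝ) 1)).map g := by
    rw [← hfst i, Measure.map_map hg (measurable_pi_apply i).fst]
    rfl
  have hint : Integrable (fun ω : ℕ → ℝ × ℝ => g (ω 0).1) P := by
    refine Integrable.of_bound (hξ 0).aestronglyMeasurable 1 (ae_of_all _ fun ω => ?_)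
    simp only [g]
    split <;> simp
  have hindep : Pairwise (Function.onFun (IndepFun · · P) fun i ω => g (ω i).1) :=
    fun i j hij => (hIndep.comp (fun _ v => g v.1) fun _ => hg.comp measurable_fst).indepFun hij
  have hident (i : ℕ) : IdentDistrib (fun ω => g (ω i).1) (fun ω => g (ω 0).1) P P :=
    ⟨(hξ i).aemeasurable, (hξ 0).aemeasurable, by rw [hmap i, hmap 0]⟩
  have hneg : ∫ ω, g (ω 0).1 ∂P < 0 := by
    rw [← integral_map (measurable_pi_apply 0).fst.aemeasurable hg.aestronglyMeasurable,
      hfst 0, integral_volume_restrict_Icc_sign ht₀ (by linarith)]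
    linarith
  exact ae_tendsto_sum_atBot_of_integral_neg hint hindep hident hneg

theorem ae_frequently_bdCocycle_le [IsProbabilityMeasure P] (hγ₁ : 0 < γ₁) (hγ₂ : 0 ≤ γ₂)
    (hIndep : iIndepFun (fun n (ω : ℕ → ℝ × ℝ) => ω n) P)
    (hfst : ∀ i, P.map (fun ω => (ω i).1) = volume.restrict (Set.Icc (0 : ℝ) 1))
    {M : ℕ} (hM : γ₁ < γ₂ * M) (x y : ℕ) :
    ∀ᵐ ω ∂P, ∃ᶠ j in atTop,
      bdCocycle γ₁ γ₂ (fun i => (ω i).1) (j * M) x ≤ 2 * M ∧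
        bdCocycle γ₁ γ₂ (fun i => (ω i).1) (j * M) y ≤ 2 * M := by
  have hM₀ : 0 < M := Nat.pos_of_ne_zero fun h => by simp [h] at hM; linarith
  have ht : γ₁ / (γ₁ + γ₂ * M) < 1 / 2 := by
    rw [div_lt_iff₀ (by positivity)]
    linarith
  filter_upwards [ae_tendsto_sum_sign_atBot hIndep hfst (by positivity) ht] with ω hS
  set S := fun n => ∑ i ∈ Finset.range n,
    if (ω i).1 < γ₁ / (γ₁ + γ₂ * M) then (1 : ℝ) else -1
  set X := fun n z => bdCocycle γ₁ γ₂ (fun i => (ω i).1) n z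
  set Z : ℕ → ℝ := fun n => max (X n x : ℝ) (X n y)
  have hstep (n : ℕ) : Z (n + 1) ≤ max (Z n + (S (n + 1) - S n)) M := by
    simp only [S, Finset.sum_range_succ, add_sub_cancel_left]
    refine max_le ((bdStep_le_max_add hγ₁ hγ₂ M _ _).trans ?_)
      ((bdStep_le_max_add hγ₁ hγ₂ M _ _).trans ?_) <;> gcongr
    exacts [le_max_left _ _, le_max_right _ _]
  have hinc (n : ℕ) : Z (n + 1) ≤ Z n + 1 := by
    simp only [Z, ← max_add_add_right]
    exact max_le_max (by exact_mod_cast bdCocycle_succ_le _ n x)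
      (by exact_mod_cast bdCocycle_succ_le _ n y)
  have hlow := frequently_le_of_le_max_add (Z := Z) (b := 0)
    (fun n => le_max_of_le_left (Nat.cast_nonneg _)) hS hstep
  refine (frequently_apply_mul_le_add hM₀ hinc hlow).mono fun j hj => ?_
  obtain ⟨hx, hy⟩ := max_le_iff.1 hj
  constructor
  · exact_mod_cast (by linarith : (X (j * M) x : ℝ) ≤ 2 * M)
  · exact_mod_cast (by linarith : (X (j * M) y : ℝ) ≤ 2 * M)

theorem measure_bdCocycle_ne_add_le (hγ₁ : 0 < γ₁) (hγ₂ : 0 ≤ γ₂)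
    (hIndep : iIndepFun (fun n (ω : ℕ → ℝ × ℝ) => ω n) P)
    (hfst : ∀ i, P.map (fun ω => (ω i).1) = volume.restrict (Set.Icc (0 : ℝ) 1))
    {x y : ℕ} (hpar : x % 2 = y % 2) (n k : ℕ) :
    P {ω | bdCocycle γ₁ γ₂ (fun i => (ω i).1) (n + k) x ≠
        bdCocycle γ₁ γ₂ (fun i => (ω i).1) (n + k) y} +
      ENNReal.ofReal (1 - γ₁ / (γ₁ + γ₂)) ^ k *
        P ({ω | bdCocycle γ₁ γ₂ (fun i => (ω i).1) n x ≠
            bdCocycle γ₁ γ₂ (fun i => (ω i).1) n y} ∩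
          {ω | bdCocycle γ₁ γ₂ (fun i => (ω i).1) n x ≤ k ∧
            bdCocycle γ₁ γ₂ (fun i => (ω i).1) n y ≤ k}) ≤
      P {ω | bdCocycle γ₁ γ₂ (fun i => (ω i).1) n x ≠
        bdCocycle γ₁ γ₂ (fun i => (ω i).1) n y} := by
  set X := fun (m z : ℕ) (ω : ℕ → ℝ × ℝ) => bdCocycle γ₁ γ₂ (fun i => (ω i).1) m z
  set D := {ω | X n x ω ≠ X n y ω} ∩ {ω | X n x ω ≤ k ∧ X n y ω ≤ k}
  set G := ⋂ i ∈ Finset.Ico n (n + k), {ω : ℕ → ℝ × ℝ | γ₁ / (γ₁ + γ₂) ≤ (ω i).1}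
  have hX (z : ℕ) : Measurable (X n z) :=
    measurable_bdCocycle (fun i => (measurable_pi_apply i).fst) n z
  have hXdep (z : ℕ) : DependsOn (X n z) (Finset.range n) := fun ω ω' h =>
    dependsOn_bdCocycle n z fun i hi => congrArg Prod.fst (h i (by simpa using hi))
  have hD : MeasurableSet D := (hX x).prodMk (hX y)
    (MeasurableSet.of_discrete (s := {p : ℕ × ℕ | p.1 ≠ p.2} ∩ {p | p.1 ≤ k ∧ p.2 ≤ k}))
  have hG : MeasurableSet G := Finset.measurableSet_biInter _ fun i _ =>
    measurableSet_le measurable_const (measurable_pi_apply i).fst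
  have hDG : P (D ∩ G) = P D * P G := by
    refine measure_inter_eq_mul_of_dependsOn hIndep (S := Finset.range n)
      (T := Finset.Ico n (n + k)) (Finset.disjoint_left.2 fun i h₁ h₂ => ?_) hD hG
      (fun ω ω' h => by
        simp only [D, Set.mem_inter_iff, Set.mem_ofPred_eq, hXdep x h, hXdep y h])
      (fun ω ω' h => ?_)
    · simp only [Finset.mem_range, Finset.mem_Ico] at h₁ h₂
      omega
    · simp only [G, Set.mem_iInter, Set.mem_ofPred_eq]
      exact propext (forall₂_congr fun i hi => by rw [h i (Finset.mem_coe.2 hi)])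
  have hnull : P ({ω | X (n + k) x ω ≠ X (n + k) y ω} ∩ (D ∩ G)) = 0 := by
    refine measure_mono_null ?_ (ae_iff.1 (ae_forall_fst_lt_one hfst))
    rintro ω ⟨hne, ⟨-, hx, hy⟩, hdown⟩ hq
    exact hne <| bdCocycle_add_eq_of_le hγ₁ hγ₂ hq hpar hx hy fun i hi =>
      Set.mem_iInter₂.1 hdown i hi
  calc _ = P {ω | X (n + k) x ω ≠ X (n + k) y ω} + P (D ∩ G) := by
        rw [hDG, measure_biInter_le_fst hIndep hfst (by positivity), Nat.card_Ico,
          add_tsub_cancel_left, mul_comm]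
    _ = P ({ω | X (n + k) x ω ≠ X (n + k) y ω} ∪ D ∩ G) :=
        (measure_union₀ (hD.inter hG).nullMeasurableSet hnull).symm
    _ ≤ P {ω | X n x ω ≠ X n y ω} := measure_mono (Set.union_subset
        (fun ω hne heq => hne (bdCocycle_add_eq_of_eq heq k)) fun ω h => h.1.1)

theorem ae_exists_bdCocycle_eq [IsProbabilityMeasure P] (hγ₁ : 0 < γ₁) (hγ₂ : 0 < γ₂)
    (hIndep : iIndepFun (fun n (ω : ℕ → ℝ × ℝ) => ω n) P)
    (hfst : ∀ i, P.map (fun ω => (ω i).1) = volume.restrict (Set.Icc (0 : ℝ) 1))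
    {x y : ℕ} (hpar : x % 2 = y % 2) :
    ∀ᵐ ω ∂P, ∃ n, bdCocycle γ₁ γ₂ (fun i => (ω i).1) n x =
      bdCocycle γ₁ γ₂ (fun i => (ω i).1) n y := by
  obtain ⟨M, hM⟩ : ∃ M : ℕ, γ₁ < γ₂ * M := by
    obtain ⟨M, hM⟩ := exists_nat_gt (γ₁ / γ₂)
    exact ⟨M, by rwa [div_lt_iff₀' hγ₂] at hM⟩
  set apart : ℕ → Set (ℕ → ℝ × ℝ) := fun j =>
    {ω | bdCocycle γ₁ γ₂ (fun i => (ω i).1) (j * M) x ≠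
      bdCocycle γ₁ γ₂ (fun i => (ω i).1) (j * M) y}
  set low : ℕ → Set (ℕ → ℝ × ℝ) := fun j =>
    {ω | bdCocycle γ₁ γ₂ (fun i => (ω i).1) (j * M) x ≤ 2 * M ∧
      bdCocycle γ₁ γ₂ (fun i => (ω i).1) (j * M) y ≤ 2 * M}
  set c := ENNReal.ofReal (1 - γ₁ / (γ₁ + γ₂)) ^ (2 * M)
  have hc : c ≠ 0 := pow_ne_zero _ (ENNReal.ofReal_pos.2
    (by rw [sub_pos, div_lt_one (by positivity)]; linarith)).ne'
  have hkey (j : ℕ) : P (apart (j + 2)) + c * P (apart j ∩ low j) ≤ P (apart j) := by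
    simpa only [apart, add_mul] using
      measure_bdCocycle_ne_add_le hγ₁ hγ₂.le hIndep hfst hpar (j * M) (2 * M)
  have hsum : ∑' j, P (apart j ∩ low j) ≠ ⊤ := by
    intro htop
    have hbound := mul_tsum_le_add_of_add_mul_le hkey
    rw [htop, ENNReal.mul_top hc] at hbound
    exact (ENNReal.add_lt_top.2 ⟨measure_lt_top P _, measure_lt_top P _⟩).not_ge hbound
  filter_upwards [ae_eventually_notMem hsum,
    ae_frequently_bdCocycle_le hγ₁ hγ₂.le hIndep hfst hM x y] with ω hnot hlow
  obtain ⟨j, hjlow, hj⟩ := (hlow.and_eventually hnot).exists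
  exact ⟨j * M, by_contra fun hne => hj ⟨hne, hjlow⟩⟩

end Noise

/-- Time-shifted synchronization of the augmented birth-death chain: if the initial states
`x` and `y` have the same parity, then for almost every noise realization
`ω = (q,r) ∈ ([0,1]²)^ℕ` (iid uniform coordinates) there exist `n₀ ∈ ℕ` and `R ≥ 0` such
that for all `n ≥ n₀` the states coincide, `Xⁿ(x) = Xⁿ(y)`, and the jump times differ by the
constant shift `R`, `|Tⁿ(x) − Tⁿ(y)| = R`. -/
theorem stmt8 (γ₁ γ₂ : ℝ) (hγ₁ : 0 < γ₁) (hγ₂ : 0 < γ₂)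
    (P : Measure (ℕ → ℝ × ℝ)) [IsProbabilityMeasure P]
    (hIndep : iIndepFun (fun n (ω : ℕ → ℝ × ℝ) => ω n) P)
    (hUnif : ∀ n : ℕ, P.map (fun ω => ω n) =
      (volume.restrict (Set.Icc (0 : ℝ) 1)).prod (volume.restrict (Set.Icc (0 : ℝ) 1)))
    (x y : ℕ) (hpar : x % 2 = y % 2) :
    ∀ᵐ ω ∂P, ∃ n₀ : ℕ, ∃ R : ℝ, 0 ≤ R ∧ ∀ n ≥ n₀,
      bdCocycle γ₁ γ₂ (fun k => (ω k).1) n x = bdCocycle γ₁ γ₂ (fun k => (ω k).1) n y ∧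
      |bdTime γ₁ γ₂ ω x n - bdTime γ₁ γ₂ ω y n| = R := by
  have hfst (i : ℕ) : P.map (fun ω => (ω i).1) = volume.restrict (Set.Icc (0 : ℝ) 1) :=
    map_fst_eq_of_map_eq_prod (measurable_pi_apply i) (hUnif i)
  filter_upwards [ae_exists_bdCocycle_eq hγ₁ hγ₂ hIndep hfst hpar] with ω ⟨n₀, hn₀⟩
  refine ⟨n₀, |bdTime γ₁ γ₂ ω x n₀ - bdTime γ₁ γ₂ ω y n₀|, abs_nonneg _, fun n hn => ?_⟩
  obtain ⟨k, rfl⟩ := Nat.exists_eq_add_of_le hn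
  exact ⟨bdCocycle_add_eq_of_eq hn₀ k, by rw [bdTime_sub_bdTime_add_of_eq hn₀ k]⟩
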